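/- arXiv:2402.18218 — 3 statements merged into one kernel-verified Lean document; each statement's English description precedes it below -/
import Mathlib

section
/- Let 𝔩 be a Lie subalgebra of so(3) ⊕ so(3) that is not commutative. Then 𝔩 is conjugate under an inner automorphism of so(3) ⊕ so(3) to one of: (a) a direct sum 𝔩₁ ⊕ 𝔩₂ with each 𝔩ᵢ ∈ {so(3), 𝔱, 0} where 𝔱 is a fixed maximal torus of so(3); or (b) the diagonal subalgebra {(X, X) : X ∈ so(3)}. -/
open Matrix

attribute [local instance 100] LieRing.ofAssociativeRing

/-- `SO(3)` as a set of `3×3` real matrices. -/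
def SO3set : Set (Matrix (Fin 3) (Fin 3) ℝ) :=
  {A | A * Aᵀ = 1 ∧ A.det = 1}

/-- `so(3)`: antisymmetric `3×3` real matrices. -/
noncomputable def so3 : LieSubalgebra ℝ (Matrix (Fin 3) (Fin 3) ℝ) :=
  skewAdjointMatricesLieSubalgebra (1 : Matrix (Fin 3) (Fin 3) ℝ)

/-- A fixed maximal torus `𝔱` of `so(3)`: the span of the infinitesimal rotation
about the third axis. -/
noncomputable def torus3 : Set (Matrix (Fin 3) (Fin 3) ℝ) :=
  (Submodule.span ℝ {(!![0, -1, 0; 1, 0, 0; 0, 0, 0] : Matrix (Fin 3) (Fin 3) ℝ)} :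
    Submodule ℝ (Matrix (Fin 3) (Fin 3) ℝ))

/-!
Through the hat map, `so(3)` is `(ℝ³, ⨯₃)` and conjugation by `g ∈ SO(3)` is `u ↦ g u`.
A cross-closed subspace of `ℝ³` is `0`, a line or `ℝ³`, and a nonzero ideal is `ℝ³`.
For a non-abelian subalgebra `W ≤ ℝ³ × ℝ³` one projection, say the first, is onto (otherwise
both images are abelian), so `{a | (a, 0) ∈ W}` is an ideal of `ℝ³`. If it is `ℝ³`, then
`W = ℝ³ × P` and a rotation moves a line `P` onto `ℝ e₃`. If it is `0`, then `W` is the graph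
of an automorphism of `(ℝ³, ⨯₃)`; automorphisms preserve the trace form
`tr (ad u ∘ ad v) = -2 u ⬝ᵥ v`, hence are rotations, and `W` is conjugate to the diagonal.
-/

local notation "ℝ³" => Fin 3 → ℝ

section CrossProduct

variable {K : Type*} [Field K]

lemma exists_cross_ne_zero {u : Fin 3 → K} (hu : u ≠ 0) : ∃ x, x ⨯₃ u ≠ 0 := by
  by_contra! h
  apply hu
  have h₀ := congrFun (h ![1, 0, 0])
  have h₁ := congrFun (h ![0, 1, 0])
  ext i
  fin_cases i
  · simpa [cross_apply] using h₁ 2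
  · simpa [cross_apply] using h₀ 2
  · simpa [cross_apply] using h₀ 1

lemma mem_span_singleton_of_cross_eq_zero {u v : Fin 3 → K} (hu : u ≠ 0) (h : u ⨯₃ v = 0) :
    v ∈ K ∙ u := by
  by_contra hv
  refine crossProduct_ne_zero_iff_linearIndependent.mpr ?_ h
  rw [LinearIndependent.pair_iff' hu]
  exact fun a hav => hv (Submodule.mem_span_singleton.mpr ⟨a, hav⟩)

end CrossProduct

lemma eq_top_of_cross_ne_zero {S : Submodule ℝ ℝ³} (hS : ∀ u ∈ S, ∀ v ∈ S, u ⨯₃ v ∈ S)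
    {u v : ℝ³} (hu : u ∈ S) (hv : v ∈ S) (huv : u ⨯₃ v ≠ 0) : S = ⊤ := by
  have hdet : Matrix.det ![u, v, u ⨯₃ v] ≠ 0 := by
    rw [← triple_product_eq_det, triple_product_permutation, triple_product_permutation]
    exact mt dotProduct_self_eq_zero.mp huv
  have hspan := (Matrix.linearIndependent_rows_of_det_ne_zero hdet).span_eq_top_of_card_eq_finrank
    (by simp)
  rw [eq_top_iff, ← hspan, Submodule.span_le, Set.range_subset_iff]
  intro i
  fin_cases i
  exacts [hu, hv, hS u hu v hv]

lemma eq_bot_or_eq_span_singleton_or_eq_top {S : Submodule ℝ ℝ³}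
    (hS : ∀ u ∈ S, ∀ v ∈ S, u ⨯₃ v ∈ S) :
    S = ⊥ ∨ (∃ u ≠ 0, S = ℝ ∙ u) ∨ S = ⊤ := by
  by_cases htop : S = ⊤
  · exact .inr (.inr htop)
  by_cases hbot : S = ⊥
  · exact .inl hbot
  obtain ⟨u, hu, hu₀⟩ := Submodule.exists_mem_ne_zero_of_ne_bot hbot
  refine .inr (.inl ⟨u, hu₀, le_antisymm (fun v hv => ?_) ((S.span_singleton_le_iff_mem u).mpr hu)⟩)
  by_contra hv'
  exact htop (eq_top_of_cross_ne_zero hS hu hv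
    fun h => hv' (mem_span_singleton_of_cross_eq_zero hu₀ h))

lemma eq_top_of_cross_mem {S : Submodule ℝ ℝ³} (hS : ∀ x, ∀ v ∈ S, x ⨯₃ v ∈ S) (hS₀ : S ≠ ⊥) :
    S = ⊤ := by
  obtain ⟨u, hu, hu₀⟩ := Submodule.exists_mem_ne_zero_of_ne_bot hS₀
  obtain ⟨x, hx⟩ := exists_cross_ne_zero hu₀
  refine eq_top_of_cross_ne_zero (fun a _ b hb => hS a b hb) hu (hS x u hu) fun h => hx ?_
  -- `x ⨯₃ u` is orthogonal to `u`, so it can only be parallel to `u` if it vanishes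
  obtain ⟨c, hc⟩ := Submodule.mem_span_singleton.mp (mem_span_singleton_of_cross_eq_zero hu₀ h)
  have hcu : c * (u ⬝ᵥ u) = 0 := by
    rw [← smul_eq_mul, ← dotProduct_smul, hc, dot_cross_self]
  rw [← hc, (mul_eq_zero.mp hcu).resolve_right (mt dotProduct_self_eq_zero.mp hu₀), zero_smul]

lemma det_mulVec_vecCons {R : Type*} [CommRing R] (g : Matrix (Fin 3) (Fin 3) R)
    (a b c : Fin 3 → R) :
    Matrix.det ![g *ᵥ a, g *ᵥ b, g *ᵥ c] = g.det * Matrix.det ![a, b, c] := by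
  have h : Matrix.of ![g *ᵥ a, g *ᵥ b, g *ᵥ c] = Matrix.of ![a, b, c] * gᵀ := by
    ext1 i
    rw [mul_apply_eq_vecMul, vecMul_transpose]
    fin_cases i <;> exact fun _ => rfl
  change (Matrix.of ![g *ᵥ a, g *ᵥ b, g *ᵥ c]).det = _
  rw [h, det_mul, det_transpose, mul_comm]
  rfl

lemma mulVec_dotProduct_mulVec {n R : Type*} [Fintype n] [DecidableEq n] [CommRing R]
    {g : Matrix n n R} (hg : gᵀ * g = 1) (x y : n → R) : g *ᵥ x ⬝ᵥ g *ᵥ y = x ⬝ᵥ y := by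
  rw [dotProduct_mulVec, ← mulVec_transpose, mulVec_mulVec, hg, one_mulVec]

lemma mulVec_cross_mulVec {R : Type*} [CommRing R] {g : Matrix (Fin 3) (Fin 3) R}
    (hg : g * gᵀ = 1) (u v : Fin 3 → R) : (g *ᵥ u) ⨯₃ (g *ᵥ v) = g.det • g *ᵥ (u ⨯₃ v) := by
  refine dotProduct_eq _ _ fun z => ?_
  obtain ⟨w, rfl⟩ : ∃ w, g *ᵥ w = z := ⟨gᵀ *ᵥ z, by rw [mulVec_mulVec, hg, one_mulVec]⟩
  rw [dotProduct_comm, triple_product_eq_det, det_mulVec_vecCons, ← triple_product_eq_det,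
    smul_dotProduct, mulVec_dotProduct_mulVec (mul_eq_one_comm.mp hg), dotProduct_comm, smul_eq_mul]

lemma mulVec_cross_mulVec_of_mem_SO3set {g : Matrix (Fin 3) (Fin 3) ℝ} (hg : g ∈ SO3set)
    (u v : ℝ³) :
    (g *ᵥ u) ⨯₃ (g *ᵥ v) = g *ᵥ (u ⨯₃ v) := by
  rw [mulVec_cross_mulVec hg.1, hg.2, one_smul]

noncomputable def hat : ℝ³ →ₗ[ℝ] Matrix (Fin 3) (Fin 3) ℝ where
  toFun u := !![0, -u 2, u 1; u 2, 0, -u 0; -u 1, u 0, 0]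
  map_add' u v := by ext i j; fin_cases i <;> fin_cases j <;> simp [add_comm]
  map_smul' c u := by ext i j; fin_cases i <;> fin_cases j <;> simp

lemma hat_apply (u : ℝ³) : hat u = !![0, -u 2, u 1; u 2, 0, -u 0; -u 1, u 0, 0] := rfl

lemma hat_mulVec (u w : ℝ³) : hat u *ᵥ w = u ⨯₃ w := by
  ext i
  fin_cases i <;> simp [hat_apply, cross_apply, mulVec, dotProduct, Fin.sum_univ_three] <;> ring

lemma lie_hat (u v : ℝ³) : ⁅hat u, hat v⁆ = hat (u ⨯₃ v) := by
  refine ext_of_mulVec_single fun i => ?_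
  rw [Ring.lie_def, sub_mulVec, ← mulVec_mulVec, ← mulVec_mulVec]
  simp only [hat_mulVec, cross_cross]

lemma mem_so3_iff {A : Matrix (Fin 3) (Fin 3) ℝ} : A ∈ so3 ↔ Aᵀ = -A := by
  simp [so3, mem_skewAdjointMatricesSubmodule, Matrix.IsSkewAdjoint, Matrix.IsAdjointPair]

lemma range_hat : Set.range hat = so3 := by
  ext A
  rw [Set.mem_range, SetLike.mem_coe, mem_so3_iff]
  constructor
  · rintro ⟨u, rfl⟩
    ext i j
    fin_cases i <;> fin_cases j <;> simp [hat_apply]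
  · intro hA
    have h : ∀ i j, A j i = -A i j := fun i j => by simpa using congrFun (congrFun hA i) j
    refine ⟨![A 2 1, A 0 2, A 1 0], ?_⟩
    ext i j
    fin_cases i <;> fin_cases j <;> simp [hat_apply] <;>
      linarith [h 0 0, h 1 1, h 2 2, h 0 1, h 0 2, h 1 2]

lemma conj_hat_of_mem_SO3set {g : Matrix (Fin 3) (Fin 3) ℝ} (hg : g ∈ SO3set) (u : ℝ³) :
    g * hat u * gᵀ = hat (g *ᵥ u) := by
  refine ext_of_mulVec_single fun i => ?_
  rw [← mulVec_mulVec, ← mulVec_mulVec, hat_mulVec, hat_mulVec,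
    ← mulVec_cross_mulVec_of_mem_SO3set hg, mulVec_mulVec, hg.1, one_mulVec]

local notation "e₃" => (![0, 0, 1] : ℝ³)

lemma exists_smul_dotProduct_self_eq_one {v : ℝ³} (hv : v ≠ 0) :
    ∃ c : ℝ, c ≠ 0 ∧ c • v ⬝ᵥ c • v = 1 := by
  have hpos : 0 < v ⬝ᵥ v :=
    (Fintype.sum_nonneg fun i => mul_self_nonneg (v i)).lt_of_ne' (mt dotProduct_self_eq_zero.mp hv)
  refine ⟨(√(v ⬝ᵥ v))⁻¹, by positivity, ?_⟩
  rw [smul_dotProduct, dotProduct_smul, smul_eq_mul, smul_eq_mul, ← mul_assoc, ← mul_inv,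
    Real.mul_self_sqrt hpos.le, inv_mul_cancel₀ hpos.ne']

lemma of_orthonormal_mem_SO3set {a b : ℝ³} (ha : a ⬝ᵥ a = 1) (hb : b ⬝ᵥ b = 1)
    (hab : a ⬝ᵥ b = 0) : Matrix.of ![b, a ⨯₃ b, a] ∈ SO3set := by
  refine ⟨?_, ?_⟩
  · ext i j
    change ![b, a ⨯₃ b, a] i ⬝ᵥ ![b, a ⨯₃ b, a] j = _
    fin_cases i <;> fin_cases j <;>
      simp [one_apply, cross_dot_cross, dot_self_cross, dot_cross_self,
        dotProduct_comm b a, dotProduct_comm (a ⨯₃ b), ha, hb, hab]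
  · change Matrix.det ![b, a ⨯₃ b, a] = 1
    rw [← triple_product_eq_det, triple_product_permutation, cross_dot_cross, ha, hb, hab,
      dotProduct_comm, hab]
    ring

lemma of_orthonormal_mulVec {a b : ℝ³} (ha : a ⬝ᵥ a = 1) (hab : a ⬝ᵥ b = 0) :
    Matrix.of ![b, a ⨯₃ b, a] *ᵥ a = e₃ := by
  ext i
  fin_cases i <;> simp [mulVec, dotProduct_comm b a, hab, ha, dotProduct_comm _ a, dot_self_cross]

lemma exists_mem_SO3set_map_span_eq {u : ℝ³} (hu : u ≠ 0) :
    ∃ g ∈ SO3set, (ℝ ∙ u).map g.mulVecLin = ℝ ∙ e₃ := by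
  obtain ⟨c, hc, ha⟩ := exists_smul_dotProduct_self_eq_one hu
  obtain ⟨x, hx⟩ := exists_cross_ne_zero hu
  obtain ⟨d, -, hb⟩ := exists_smul_dotProduct_self_eq_one hx
  have hab : c • u ⬝ᵥ d • (x ⨯₃ u) = 0 := by
    rw [smul_dotProduct, dotProduct_smul, dot_cross_self, smul_zero, smul_zero]
  refine ⟨_, of_orthonormal_mem_SO3set ha hb hab, ?_⟩
  rw [Submodule.map_span, Set.image_singleton, mulVecLin_apply,
    ← Submodule.span_singleton_smul_eq (isUnit_iff_ne_zero.mpr hc), ← mulVec_smul,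
    of_orthonormal_mulVec ha hab]

lemma trace_crossProduct_comp_crossProduct {R : Type*} [CommRing R] (u v : Fin 3 → R) :
    LinearMap.trace R (Fin 3 → R) (crossProduct u ∘ₗ crossProduct v) = -2 * (u ⬝ᵥ v) := by
  rw [LinearMap.trace_eq_matrix_trace R (Pi.basisFun R (Fin 3))]
  simp [Matrix.trace, Fin.sum_univ_three, cross_apply, vec3_dotProduct]
  ring

lemma dotProduct_map_of_map_cross (e : ℝ³ ≃ₗ[ℝ] ℝ³) (he : ∀ u v, e (u ⨯₃ v) = e u ⨯₃ e v)
    (u v : ℝ³) : e u ⬝ᵥ e v = u ⬝ᵥ v := by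
  have hconj : ∀ u, crossProduct (e u) = e.conj (crossProduct u) := fun u => by
    refine LinearMap.ext fun w => ?_
    simp [LinearEquiv.conj_apply, he]
  have h := trace_crossProduct_comp_crossProduct (e u) (e v)
  rw [hconj, hconj, ← LinearEquiv.conj_comp, LinearMap.trace_conj',
    trace_crossProduct_comp_crossProduct] at h
  linarith

lemma exists_mem_SO3set_of_map_cross (e : ℝ³ ≃ₗ[ℝ] ℝ³) (he : ∀ u v, e (u ⨯₃ v) = e u ⨯₃ e v) :
    ∃ g ∈ SO3set, ∀ u, e u = g *ᵥ u := by
  set g := LinearMap.toMatrix' (e : ℝ³ →ₗ[ℝ] ℝ³)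
  have hg : ∀ u, e u = g *ᵥ u := fun u => (LinearMap.toMatrix'_mulVec _ u).symm
  have horth : gᵀ * g = 1 := by
    ext i j
    change (fun k => g k i) ⬝ᵥ (fun k => g k j) = _
    simp only [g, LinearMap.toMatrix'_apply, LinearEquiv.coe_coe]
    rw [dotProduct_map_of_map_cross e he]
    simp [one_apply, Pi.single_apply, eq_comm]
  have horth' : g * gᵀ = 1 := mul_eq_one_comm.mp horth
  refine ⟨g, ⟨horth', ?_⟩, hg⟩
  obtain ⟨x, hx⟩ := exists_cross_ne_zero (one_ne_zero : (1 : ℝ³) ≠ 0)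
  have hx' : g *ᵥ (x ⨯₃ 1) ≠ 0 := by rwa [← hg, e.map_ne_zero_iff]
  have h := mulVec_cross_mulVec horth' x 1
  rw [← hg, ← hg, ← he, hg] at h
  exact smul_left_injective ℝ hx' (h.symm.trans (one_smul ℝ _).symm)

section ProdSubmodule

variable {R M N : Type*} [Ring R] [AddCommGroup M] [Module R M] [AddCommGroup N] [Module R N]
  {W : Submodule R (M × N)}

lemma bijective_fst_comp_subtype (hfst : W.map (LinearMap.fst R M N) = ⊤)
    (hinr : W.comap (LinearMap.inr R M N) = ⊥) : Function.Bijective (Prod.fst ∘ W.subtype) := by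
  refine ⟨fun x y hxy => ?_, fun a => ?_⟩
  · change (x : M × N).1 = (y : M × N).1 at hxy
    have h : (x - y : M × N).2 ∈ W.comap (LinearMap.inr R M N) := by
      rw [Submodule.mem_comap, LinearMap.inr_apply]
      convert (x - y).2 using 1
      ext <;> simp [hxy]
    rw [hinr, Submodule.mem_bot, Prod.snd_sub, sub_eq_zero] at h
    exact Subtype.ext (Prod.ext hxy h)
  · obtain ⟨p, hp, rfl⟩ : a ∈ W.map (LinearMap.fst R M N) := hfst ▸ Submodule.mem_top
    exact ⟨⟨p, hp⟩, rfl⟩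

lemma bijective_snd_comp_subtype (hsnd : W.map (LinearMap.snd R M N) = ⊤)
    (hinl : W.comap (LinearMap.inl R M N) = ⊥) : Function.Bijective (Prod.snd ∘ W.subtype) := by
  refine ⟨fun x y hxy => ?_, fun b => ?_⟩
  · change (x : M × N).2 = (y : M × N).2 at hxy
    have h : (x - y : M × N).1 ∈ W.comap (LinearMap.inl R M N) := by
      rw [Submodule.mem_comap, LinearMap.inl_apply]
      convert (x - y).2 using 1
      ext <;> simp [hxy]
    rw [hinl, Submodule.mem_bot, Prod.fst_sub, sub_eq_zero] at h
    exact Subtype.ext (Prod.ext h hxy)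
  · obtain ⟨p, hp, rfl⟩ : b ∈ W.map (LinearMap.snd R M N) := hsnd ▸ Submodule.mem_top
    exact ⟨⟨p, hp⟩, rfl⟩

end ProdSubmodule

def prodCross (p q : ℝ³ × ℝ³) : ℝ³ × ℝ³ := (p.1 ⨯₃ q.1, p.2 ⨯₃ q.2)

def standardFactors : Set (Submodule ℝ ℝ³) := {⊤, ℝ ∙ e₃, ⊥}

def IsStandard (T : Set (ℝ³ × ℝ³)) : Prop :=
  (∃ S₁ ∈ standardFactors, ∃ S₂ ∈ standardFactors, T = (S₁ : Set ℝ³) ×ˢ (S₂ : Set ℝ³)) ∨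
    T = {p | p.2 = p.1}

def IsConjStandard (T : Set (ℝ³ × ℝ³)) : Prop :=
  ∃ g₁ ∈ SO3set, ∃ g₂ ∈ SO3set, IsStandard (Prod.map (g₁ *ᵥ ·) (g₂ *ᵥ ·) '' T)

lemma one_mem_SO3set : (1 : Matrix (Fin 3) (Fin 3) ℝ) ∈ SO3set := ⟨by simp, by simp⟩

lemma IsStandard.image_swap {T : Set (ℝ³ × ℝ³)} (h : IsStandard T) :
    IsStandard (Prod.swap '' T) := by
  rcases h with ⟨S₁, h₁, S₂, h₂, rfl⟩ | rfl
  · exact .inl ⟨S₂, h₂, S₁, h₁, Set.image_swap_prod _ _⟩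
  · refine .inr (Set.ext fun p => ?_)
    simp [Set.image_swap_eq_preimage_swap, eq_comm]

lemma IsConjStandard.of_image_swap {T : Set (ℝ³ × ℝ³)} (h : IsConjStandard (Prod.swap '' T)) :
    IsConjStandard T := by
  obtain ⟨g₁, hg₁, g₂, hg₂, h⟩ := h
  refine ⟨g₂, hg₂, g₁, hg₁, ?_⟩
  have := h.image_swap
  rwa [Set.image_image, Set.image_image] at this

lemma exists_mem_SO3set_map_mem_standardFactors {S : Submodule ℝ ℝ³}
    (hS : ∀ u ∈ S, ∀ v ∈ S, u ⨯₃ v ∈ S) :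
    ∃ g ∈ SO3set, S.map g.mulVecLin ∈ standardFactors := by
  rcases eq_bot_or_eq_span_singleton_or_eq_top hS with rfl | ⟨u, hu, rfl⟩ | rfl
  · exact ⟨1, one_mem_SO3set, by simp [standardFactors]⟩
  · obtain ⟨g, hg, hgu⟩ := exists_mem_SO3set_map_span_eq hu
    exact ⟨g, hg, by simp [standardFactors, hgu]⟩
  · exact ⟨1, one_mem_SO3set, by simp [standardFactors, mulVecLin_one]⟩

lemma isConjStandard_univ_prod {S : Submodule ℝ ℝ³} (hS : ∀ u ∈ S, ∀ v ∈ S, u ⨯₃ v ∈ S) :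
    IsConjStandard (Set.univ ×ˢ (S : Set ℝ³)) := by
  obtain ⟨g, hg, hgS⟩ := exists_mem_SO3set_map_mem_standardFactors hS
  refine ⟨1, one_mem_SO3set, g, hg, .inl ⟨⊤, by simp [standardFactors], _, hgS, ?_⟩⟩
  rw [Set.prodMap_image_prod, Submodule.map_coe]
  simp only [one_mulVec, Set.image_id', Submodule.top_coe]
  rfl

lemma isConjStandard_graph (e : ℝ³ ≃ₗ[ℝ] ℝ³) (he : ∀ u v, e (u ⨯₃ v) = e u ⨯₃ e v) :
    IsConjStandard (e.toLinearMap.graph : Set (ℝ³ × ℝ³)) := by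
  obtain ⟨g, hg, hge⟩ := exists_mem_SO3set_of_map_cross e he
  refine ⟨g, hg, 1, one_mem_SO3set, .inr (Set.ext fun p => ?_)⟩
  simp only [Set.mem_image, SetLike.mem_coe, LinearMap.mem_graph_iff, Prod.exists,
    Prod.map_apply, Matrix.one_mulVec, Set.mem_ofPred_eq]
  constructor
  · rintro ⟨a, b, hb, rfl⟩
    simp [hb, hge]
  · intro h
    refine ⟨e.symm p.1, p.1, by simp, ?_⟩
    rw [← hge, e.apply_symm_apply]
    exact Prod.ext rfl h.symm

section Subalgebra

variable {W : Submodule ℝ (ℝ³ × ℝ³)}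

lemma cross_mem_map_of_prodCross_mem (hW : ∀ p ∈ W, ∀ q ∈ W, prodCross p q ∈ W)
    {π : ℝ³ × ℝ³ →ₗ[ℝ] ℝ³} (hπ : ∀ p q, π (prodCross p q) = π p ⨯₃ π q) :
    ∀ u ∈ W.map π, ∀ v ∈ W.map π, u ⨯₃ v ∈ W.map π := by
  rintro _ ⟨p, hp, rfl⟩ _ ⟨q, hq, rfl⟩
  exact ⟨_, hW p hp q hq, hπ p q⟩

lemma comap_eq_bot_or_eq_top_of_prodCross_mem (hW : ∀ p ∈ W, ∀ q ∈ W, prodCross p q ∈ W)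
    {π : ℝ³ × ℝ³ →ₗ[ℝ] ℝ³} {ι : ℝ³ →ₗ[ℝ] ℝ³ × ℝ³}
    (hπι : ∀ p a, prodCross p (ι a) = ι (π p ⨯₃ a)) (hπ : W.map π = ⊤) :
    W.comap ι = ⊥ ∨ W.comap ι = ⊤ := by
  refine or_iff_not_imp_left.mpr (eq_top_of_cross_mem fun x a ha => ?_)
  obtain ⟨p, hp, rfl⟩ : x ∈ W.map π := hπ ▸ Submodule.mem_top
  show ι _ ∈ W
  rw [← hπι]
  exact hW p hp _ ha

lemma isConjStandard_of_map_fst_eq_top (hW : ∀ p ∈ W, ∀ q ∈ W, prodCross p q ∈ W)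
    (hnc : ∃ p ∈ W, ∃ q ∈ W, prodCross p q ≠ 0)
    (hfst : W.map (LinearMap.fst ℝ ℝ³ ℝ³) = ⊤) : IsConjStandard W := by
  set P₂ := W.map (LinearMap.snd ℝ ℝ³ ℝ³)
  have hP₂ := cross_mem_map_of_prodCross_mem hW (π := LinearMap.snd ℝ ℝ³ ℝ³) fun _ _ => rfl
  rcases comap_eq_bot_or_eq_top_of_prodCross_mem hW (π := LinearMap.fst ℝ ℝ³ ℝ³) (ι := LinearMap.inl ℝ ℝ³ ℝ³)
    (fun p a => by simp [prodCross]) hfst with hK₁ | hK₁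
  · have hsnd : P₂ = ⊤ := by
      by_contra hne
      obtain ⟨p, hp, q, hq, hpq⟩ := hnc
      have h₂ : p.2 ⨯₃ q.2 = 0 := by
        by_contra h
        exact hne (eq_top_of_cross_ne_zero hP₂ ⟨p, hp, rfl⟩ ⟨q, hq, rfl⟩ h)
      have h₁ : p.1 ⨯₃ q.1 ∈ W.comap (LinearMap.inl ℝ ℝ³ ℝ³) := by
        simpa [prodCross, h₂] using hW p hp q hq
      rw [hK₁, Submodule.mem_bot] at h₁
      exact hpq (Prod.ext h₁ h₂)
    have hK₂ : W.comap (LinearMap.inr ℝ ℝ³ ℝ³) = ⊥ := by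
      refine (comap_eq_bot_or_eq_top_of_prodCross_mem hW (π := LinearMap.snd ℝ ℝ³ ℝ³)
        (fun p a => by simp [prodCross]) hsnd).resolve_right
        fun hK₂ => bot_ne_top (hK₁.symm.trans ?_)
      -- `0 × ℝ³ ≤ W` would force `ℝ³ × 0 ≤ W`, since `W` projects onto the first factor
      refine Submodule.eq_top_iff'.mpr fun a => ?_
      obtain ⟨⟨a, b⟩, hab, rfl⟩ : a ∈ W.map (LinearMap.fst ℝ ℝ³ ℝ³) := hfst ▸ Submodule.mem_top
      have hb : ((0, b) : ℝ³ × ℝ³) ∈ W := (Submodule.eq_top_iff'.mp hK₂ b :)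
      simpa using W.sub_mem hab hb
    obtain ⟨e, rfl⟩ := Submodule.exists_equiv_eq_graph (bijective_fst_comp_subtype hfst hK₂)
      (bijective_snd_comp_subtype hsnd hK₁)
    exact isConjStandard_graph e fun u v => (hW (u, e u) rfl (v, e v) rfl).symm
  · have hW : (W : Set (ℝ³ × ℝ³)) = Set.univ ×ˢ (P₂ : Set ℝ³) := by
      ext ⟨a, b⟩
      simp only [SetLike.mem_coe, Set.mem_prod, Set.mem_univ, true_and]
      refine ⟨fun h => ⟨(a, b), h, rfl⟩, ?_⟩
      rintro ⟨⟨a', b⟩, h, rfl⟩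
      have ha : ((a - a', 0) : ℝ³ × ℝ³) ∈ W := (Submodule.eq_top_iff'.mp hK₁ (a - a') :)
      simpa using W.add_mem ha h
    rw [hW]
    exact isConjStandard_univ_prod hP₂

lemma isConjStandard_of_prodCross_ne_zero (hW : ∀ p ∈ W, ∀ q ∈ W, prodCross p q ∈ W)
    (hnc : ∃ p ∈ W, ∃ q ∈ W, prodCross p q ≠ 0) : IsConjStandard W := by
  have hsurj : W.map (LinearMap.fst ℝ ℝ³ ℝ³) = ⊤ ∨ W.map (LinearMap.snd ℝ ℝ³ ℝ³) = ⊤ := by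
    by_contra! h
    obtain ⟨p, hp, q, hq, hpq⟩ := hnc
    refine hpq (Prod.ext (not_not.mp fun h₁ => h.1 ?_) (not_not.mp fun h₂ => h.2 ?_))
    · exact eq_top_of_cross_ne_zero (cross_mem_map_of_prodCross_mem hW fun _ _ => rfl)
        ⟨p, hp, rfl⟩ ⟨q, hq, rfl⟩ h₁
    · exact eq_top_of_cross_ne_zero (cross_mem_map_of_prodCross_mem hW fun _ _ => rfl)
        ⟨p, hp, rfl⟩ ⟨q, hq, rfl⟩ h₂
  rcases hsurj with hfst | hsnd
  · exact isConjStandard_of_map_fst_eq_top hW hnc hfst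
  refine IsConjStandard.of_image_swap ?_
  rw [Set.image_swap_eq_preimage_swap]
  refine isConjStandard_of_map_fst_eq_top (W := W.comap (LinearEquiv.prodComm ℝ ℝ³ ℝ³).toLinearMap)
    (fun p hp q hq => hW _ hp _ hq) ?_ ?_
  · obtain ⟨p, hp, q, hq, hpq⟩ := hnc
    refine ⟨p.swap, hp, q.swap, hq, fun h => hpq ?_⟩
    simpa [prodCross, Prod.ext_iff, and_comm] using h
  · refine Submodule.eq_top_iff'.mpr fun x => ?_
    obtain ⟨p, hp, rfl⟩ : x ∈ W.map (LinearMap.snd ℝ ℝ³ ℝ³) := hsnd ▸ Submodule.mem_top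
    exact ⟨p.swap, hp, rfl⟩

end Subalgebra

lemma hat_e₃ : hat e₃ = !![0, -1, 0; 1, 0, 0; 0, 0, 0] := by
  simp [hat_apply]

lemma image_hat_mem_of_mem_standardFactors {S : Submodule ℝ ℝ³} (hS : S ∈ standardFactors) :
    hat '' S ∈ ({(so3 : Set (Matrix (Fin 3) (Fin 3) ℝ)), torus3, {0}} :
      Set (Set (Matrix (Fin 3) (Fin 3) ℝ))) := by
  rcases hS with rfl | rfl | rfl
  · exact .inl (by rw [Submodule.top_coe, Set.image_univ, range_hat])
  · refine .inr (.inl ?_)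
    rw [← Submodule.map_coe, Submodule.map_span, Set.image_singleton, hat_e₃]
    rfl
  · exact .inr (.inr (by simp))

lemma IsStandard.image_hat {T : Set (ℝ³ × ℝ³)} (hT : IsStandard T) :
    (∃ S₁ ∈ ({(so3 : Set (Matrix (Fin 3) (Fin 3) ℝ)), torus3, {0}} :
          Set (Set (Matrix (Fin 3) (Fin 3) ℝ))),
       ∃ S₂ ∈ ({(so3 : Set (Matrix (Fin 3) (Fin 3) ℝ)), torus3, {0}} :
          Set (Set (Matrix (Fin 3) (Fin 3) ℝ))),
        Prod.map hat hat '' T = S₁ ×ˢ S₂) ∨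
      Prod.map hat hat '' T = {p | p.1 ∈ so3 ∧ p.2 = p.1} := by
  rcases hT with ⟨S₁, h₁, S₂, h₂, rfl⟩ | rfl
  · exact .inl ⟨_, image_hat_mem_of_mem_standardFactors h₁, _,
      image_hat_mem_of_mem_standardFactors h₂, Set.prodMap_image_prod _ _ _ _⟩
  · refine .inr (Set.ext fun P => ⟨?_, ?_⟩)
    · rintro ⟨⟨u, v⟩, huv, rfl⟩
      exact ⟨range_hat.le ⟨u, rfl⟩, congrArg hat huv⟩
    · rintro ⟨hP, hP₂⟩
      obtain ⟨u, hu⟩ := range_hat.ge hP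
      exact ⟨(u, u), rfl, Prod.ext hu (hu.trans hP₂.symm)⟩

lemma lie_prodMap_hat (p q : ℝ³ × ℝ³) :
    ⁅Prod.map hat hat p, Prod.map hat hat q⁆ = Prod.map hat hat (prodCross p q) :=
  Prod.ext (lie_hat _ _) (lie_hat _ _)

lemma coe_eq_image_prodMap_hat_comap
    {L : LieSubalgebra ℝ (Matrix (Fin 3) (Fin 3) ℝ × Matrix (Fin 3) (Fin 3) ℝ)}
    (hL : ∀ p ∈ L, p.1 ∈ so3 ∧ p.2 ∈ so3) :
    (L : Set _) = Prod.map hat hat '' (L.toSubmodule.comap (hat.prodMap hat)) := by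
  refine Set.ext fun P => ⟨fun hP => ?_, fun ⟨p, hp, hpP⟩ => hpP ▸ hp⟩
  obtain ⟨u, hu⟩ := range_hat.ge (hL P hP).1
  obtain ⟨v, hv⟩ := range_hat.ge (hL P hP).2
  have hPuv : Prod.map hat hat (u, v) = P := Prod.ext hu hv
  exact ⟨(u, v), show Prod.map hat hat (u, v) ∈ L from hPuv ▸ hP, hPuv⟩

lemma image_conj_image_prodMap_hat {g₁ g₂ : Matrix (Fin 3) (Fin 3) ℝ} (hg₁ : g₁ ∈ SO3set)
    (hg₂ : g₂ ∈ SO3set) (T : Set (ℝ³ × ℝ³)) :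
    (fun P : Matrix (Fin 3) (Fin 3) ℝ × Matrix (Fin 3) (Fin 3) ℝ =>
        (g₁ * P.1 * g₁ᵀ, g₂ * P.2 * g₂ᵀ)) '' (Prod.map hat hat '' T) =
      Prod.map hat hat '' (Prod.map (g₁ *ᵥ ·) (g₂ *ᵥ ·) '' T) := by
  rw [Set.image_image, Set.image_image]
  exact Set.image_congr fun p _ =>
    Prod.ext (conj_hat_of_mem_SO3set hg₁ p.1) (conj_hat_of_mem_SO3set hg₂ p.2)

/-- Any noncommutative Lie subalgebra `𝔩 ⊆ so(3) ⊕ so(3)` is conjugate, under an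
inner automorphism (componentwise conjugation by `SO(3) × SO(3)`), to a product
`𝔩₁ ⊕ 𝔩₂` with each `𝔩ᵢ ∈ {so(3), 𝔱, 0}`, or to the diagonal `{(X,X)}`. -/
theorem stmt3
    (L : LieSubalgebra ℝ (Matrix (Fin 3) (Fin 3) ℝ × Matrix (Fin 3) (Fin 3) ℝ))
    (hL : ∀ p ∈ L, p.1 ∈ so3 ∧ p.2 ∈ so3)
    (hnc : ¬ ∀ p ∈ L, ∀ q ∈ L, ⁅p, q⁆ = (0 : Matrix (Fin 3) (Fin 3) ℝ × Matrix (Fin 3) (Fin 3) ℝ)) :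
    ∃ g₁ ∈ SO3set, ∃ g₂ ∈ SO3set,
      (∃ S₁ ∈ ({(so3 : Set (Matrix (Fin 3) (Fin 3) ℝ)), torus3, {0}} :
          Set (Set (Matrix (Fin 3) (Fin 3) ℝ))),
       ∃ S₂ ∈ ({(so3 : Set (Matrix (Fin 3) (Fin 3) ℝ)), torus3, {0}} :
          Set (Set (Matrix (Fin 3) (Fin 3) ℝ))),
        (fun p : Matrix (Fin 3) (Fin 3) ℝ × Matrix (Fin 3) (Fin 3) ℝ =>
            (g₁ * p.1 * g₁ᵀ, g₂ * p.2 * g₂ᵀ)) '' (L : Set _) = S₁ ×ˢ S₂) ∨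
      (fun p : Matrix (Fin 3) (Fin 3) ℝ × Matrix (Fin 3) (Fin 3) ℝ =>
          (g₁ * p.1 * g₁ᵀ, g₂ * p.2 * g₂ᵀ)) '' (L : Set _) =
        {p : Matrix (Fin 3) (Fin 3) ℝ × Matrix (Fin 3) (Fin 3) ℝ |
          p.1 ∈ so3 ∧ p.2 = p.1} := by
  set W := L.toSubmodule.comap (hat.prodMap hat)
  have hLW := coe_eq_image_prodMap_hat_comap hL
  have hW : ∀ p ∈ W, ∀ q ∈ W, prodCross p q ∈ W := fun p hp q hq =>
    show Prod.map hat hat (prodCross p q) ∈ L from lie_prodMap_hat p q ▸ L.lie_mem hp hq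
  have hnc' : ∃ p ∈ W, ∃ q ∈ W, prodCross p q ≠ 0 := by
    push Not at hnc
    obtain ⟨P, hP, Q, hQ, hPQ⟩ := hnc
    obtain ⟨p, hp, rfl⟩ := hLW.le hP
    obtain ⟨q, hq, rfl⟩ := hLW.le hQ
    refine ⟨p, hp, q, hq, fun h => hPQ ?_⟩
    rw [lie_prodMap_hat, h]
    exact Prod.ext (map_zero hat) (map_zero hat)
  obtain ⟨g₁, hg₁, g₂, hg₂, hstd⟩ := isConjStandard_of_prodCross_ne_zero hW hnc'
  refine ⟨g₁, hg₁, g₂, hg₂, ?_⟩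
  rw [hLW, image_conj_image_prodMap_hat hg₁ hg₂]
  exact hstd.image_hat
end

section
/- Let W = S₂ ⋉ (ℤ/2)² act on ℝ² by permuting coordinates and changing signs of coordinates independently. Define ρ_G = (3/2, 1/2), ρ_H = (0, 1/2), ρ_{H'} = (1/2, 1/2), and for X ∈ ℝ² set ‖X‖_G = max_{w ∈ W} ⟨ρ_G, w·X⟩, and similarly ‖X‖_H, ‖X‖_{H'} using the maximum over the order-2 groups {1, s} where s negates the second coordinate (for H) resp. swaps-and-negates appropriately so that ‖X‖_{H'} = max(±(X₁+X₂)/2). Then: (i) for every nonzero X ∈ ℝ², max_{w ∈ W} ‖w·X‖_H < (1/2)‖X‖_G; (ii) for every X ∈ ℝ², max_{w ∈ W} ‖w·X‖_{H'} ≤ (1/2)‖X‖_G, with strict inequality whenever |X₁| ≠ |X₂|. -/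
/-- The orbit of `X ∈ ℝ²` under the signed permutation group `W = S₂ ⋉ (ℤ/2)²`
(permuting the two coordinates and flipping their signs independently). -/
noncomputable def Worbit (X : ℝ × ℝ) : Finset (ℝ × ℝ) :=
  {(X.1, X.2), (X.1, -X.2), (-X.1, X.2), (-X.1, -X.2),
   (X.2, X.1), (X.2, -X.1), (-X.2, X.1), (-X.2, -X.1)}

/-- `‖X‖_G = max_{w ∈ W} ⟨ρ_G, w·X⟩` with `ρ_G = (3/2, 1/2)`. -/
noncomputable def normG (X : ℝ × ℝ) : ℝ :=
  (Worbit X).sup' (Finset.insert_nonempty _ _) (fun Y => 3/2 * Y.1 + 1/2 * Y.2)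

/-- `‖X‖_H = max over {1,s} of ⟨ρ_H, ·⟩` with `ρ_H = (0, 1/2)`, `s` negating the
second coordinate; concretely `‖X‖_H = |X₂|/2`. -/
noncomputable def normH (X : ℝ × ℝ) : ℝ := |X.2| / 2

/-- `‖X‖_{H'} = max(±(X₁+X₂)/2) = |X₁+X₂|/2`, coming from `ρ_{H'} = (1/2, 1/2)`. -/
noncomputable def normH' (X : ℝ × ℝ) : ℝ := |X.1 + X.2| / 2

/-- `max_{w ∈ W} f(w·X)`. -/
noncomputable def maxW (f : ℝ × ℝ → ℝ) (X : ℝ × ℝ) : ℝ :=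
  (Worbit X).sup' (Finset.insert_nonempty _ _) f

/-! Every point of the orbit of `X` is a signed permutation of `X`, so with `M ≥ m` the two
values `|X₁|, |X₂|`, both maxima over `W` are bounded by `M / 2` resp. `(M + m) / 2`, while
`‖X‖_G ≥ (3M + m) / 2`. The claims reduce to `M + m > 0` and `m ≤ M` (strictly if `m < M`). -/

lemma mem_Worbit_abs (X : ℝ × ℝ) :
    (|X.1|, |X.2|) ∈ Worbit X ∧ (|X.2|, |X.1|) ∈ Worbit X := by
  rcases abs_choice X.1 with h₁ | h₁ <;> rcases abs_choice X.2 with h₂ | h₂ <;>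
    simp [Worbit, h₁, h₂]

lemma abs_snd_le_max_of_mem_Worbit {X Y : ℝ × ℝ} (hY : Y ∈ Worbit X) :
    |Y.2| ≤ max |X.1| |X.2| := by
  simp only [Worbit, Finset.mem_insert, Finset.mem_singleton] at hY
  rcases hY with rfl | rfl | rfl | rfl | rfl | rfl | rfl | rfl <;> simp

lemma abs_fst_add_abs_snd_of_mem_Worbit {X Y : ℝ × ℝ} (hY : Y ∈ Worbit X) :
    |Y.1| + |Y.2| = |X.1| + |X.2| := by
  simp only [Worbit, Finset.mem_insert, Finset.mem_singleton] at hY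
  rcases hY with rfl | rfl | rfl | rfl | rfl | rfl | rfl | rfl <;> simp [add_comm]

lemma maxW_normH_le (X : ℝ × ℝ) : maxW normH X ≤ max |X.1| |X.2| / 2 :=
  Finset.sup'_le _ _ fun _ hY => by
    unfold normH
    linarith [abs_snd_le_max_of_mem_Worbit hY]

lemma maxW_normH'_le (X : ℝ × ℝ) : maxW normH' X ≤ (|X.1| + |X.2|) / 2 :=
  Finset.sup'_le _ _ fun Y hY => by
    rw [normH', ← abs_fst_add_abs_snd_of_mem_Worbit hY]
    gcongr
    exact abs_add_le Y.1 Y.2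

lemma three_mul_max_add_min_le_normG (X : ℝ × ℝ) :
    (3 * max |X.1| |X.2| + min |X.1| |X.2|) / 2 ≤ normG X := by
  obtain ⟨hmem, hmem_swap⟩ := mem_Worbit_abs X
  rcases le_total |X.1| |X.2| with h | h
  · rw [max_eq_right h, min_eq_left h]
    exact le_trans (by linarith) (Finset.le_sup' _ hmem_swap)
  · rw [max_eq_left h, min_eq_right h]
    exact le_trans (by linarith) (Finset.le_sup' _ hmem)

/-- (i) For every nonzero `X ∈ ℝ²`, `max_{w∈W} ‖w·X‖_H < (1/2)‖X‖_G`;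
(ii) for every `X`, `max_{w∈W} ‖w·X‖_{H'} ≤ (1/2)‖X‖_G`, with strict
inequality whenever `|X₁| ≠ |X₂|`. -/
theorem stmt5 :
    (∀ X : ℝ × ℝ, X ≠ 0 → maxW normH X < (1/2) * normG X) ∧
    (∀ X : ℝ × ℝ, maxW normH' X ≤ (1/2) * normG X) ∧
    (∀ X : ℝ × ℝ, |X.1| ≠ |X.2| → maxW normH' X < (1/2) * normG X) := by
  refine ⟨fun X hX => ?_, fun X => ?_, fun X hX => ?_⟩
  · have hmax : 0 < max |X.1| |X.2| := by
      simpa [Prod.norm_def] using norm_pos_iff.2 hX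
    have hmin : 0 ≤ min |X.1| |X.2| := le_min (abs_nonneg _) (abs_nonneg _)
    linarith [maxW_normH_le X, three_mul_max_add_min_le_normG X]
  · linarith [maxW_normH'_le X, three_mul_max_add_min_le_normG X,
      min_add_max |X.1| |X.2|, min_le_max (a := |X.1|) (b := |X.2|)]
  · linarith [maxW_normH'_le X, three_mul_max_add_min_le_normG X,
      min_add_max |X.1| |X.2|, min_lt_max.2 hX]
end

section
/- Let G = SO(1,n) realized as preserving the form with matrix diag(J, I_{n-1}), J = [[0,1],[1,0]], and let 𝔫 be the abelian nilpotent subalgebra of elements X(R) with first block row [0, R; 0...] as in the paper's conventions (R ∈ ℝ^{n-1}). For g ∈ G, define linear maps R_g, S_g : 𝔫 → ℝ^{n-1} sending X to the last n−1 entries of the first row, respectively second row, of g X g⁻¹. Then for every g ∈ G, at least one of R_g, S_g is an invertible linear map. -/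
open Matrix

/-- The matrix `S = diag(J, I_{n-1})` of the form `2x₀x₁ + x₂² + ⋯ + x_n²`. -/
noncomputable def SmatN (n : ℕ) : Matrix (Fin (n+1)) (Fin (n+1)) ℝ :=
  Matrix.of fun i k =>
    if (i.val = 0 ∧ k.val = 1) ∨ (i.val = 1 ∧ k.val = 0) then 1
    else if i = k ∧ 2 ≤ i.val then 1 else 0

/-- The element `X(R)` of the abelian nilpotent subalgebra `𝔫 ⊂ so(1,n)`:
`X(R) = [[0, b],[c, 0]]` with `b = [R; 0]`, `c = -bᵀJ`. -/
noncomputable def XmatN (n : ℕ) (R : Fin (n-1) → ℝ) : Matrix (Fin (n+1)) (Fin (n+1)) ℝ :=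
  Matrix.of fun i k =>
    (if h : i.val = 0 ∧ 2 ≤ k.val then
        R ⟨k.val - 2, by have := k.isLt; omega⟩ else 0) +
    (if h : 2 ≤ i.val ∧ k.val = 1 then
        -R ⟨i.val - 2, by have := i.isLt; omega⟩ else 0)

/-- The inclusion of the last `n-1` indices into `Fin (n+1)`. -/
def idxN (n : ℕ) (j : Fin (n-1)) : Fin (n+1) := ⟨j.val + 2, by have := j.isLt; omega⟩

/-!
Let `Q(x, y) = x ⬝ᵥ S y`, let `e₀` be the first basis vector and `b = (0, 0, R)`. Then
`X(R) S = e₀ bᵀ - b e₀ᵀ` and `g⁻¹ = S gᵀ S`, so `g X(R) g⁻¹ = (u vᵀ - v uᵀ) S` with `u = g e₀`,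
`v = g b`: the entry in row `r ∈ {0, 1}` and column `j ≥ 2` is `u_r v_j - v_r u_j`. If all these
entries vanish, the tails of `u` and `v` are proportional; together with `Q(u, u) = Q(e₀, e₀) = 0`
and `Q(u, v) = Q(e₀, b) = 0` this forces `u_r² Q(v, v) = 0`, while `Q(v, v) = Q(b, b) = |R|²`.
Hence `R_g` (resp. `S_g`) is injective, so bijective, as soon as `u₀ ≠ 0` (resp. `u₁ ≠ 0`); and
`u₀ = u₁ = 0` is impossible, since then `0 = Q(u, u) = |u_{≥2}|²` would give `u = 0`.
-/

namespace Matrix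

variable {n K : Type*} [Fintype n] [CommRing K] {S G : Matrix n n K}

lemma mulVec_dotProduct_mulVec_mulVec (hG : Gᵀ * S * G = S) (x y : n → K) :
    (G *ᵥ x) ⬝ᵥ (S *ᵥ (G *ᵥ y)) = x ⬝ᵥ (S *ᵥ y) := by
  rw [dotProduct_mulVec, dotProduct_mulVec, ← vecMul_transpose, vecMul_vecMul, vecMul_vecMul,
    ← Matrix.mul_assoc, hG, ← dotProduct_mulVec]

variable [DecidableEq n]

lemma mul_mul_transpose_mul_eq_one (hS : S * S = 1) (hG : G * S * Gᵀ = S) :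
    G * (S * Gᵀ * S) = 1 := by
  rw [← Matrix.mul_assoc, ← Matrix.mul_assoc, hG, hS]

lemma inv_eq_mul_transpose_mul (hS : S * S = 1) (hG : G * S * Gᵀ = S) : G⁻¹ = S * Gᵀ * S :=
  inv_eq_right_inv (mul_mul_transpose_mul_eq_one hS hG)

lemma transpose_mul_mul_eq (hS : S * S = 1) (hG : G * S * Gᵀ = S) : Gᵀ * S * G = S := by
  have h := congrArg (S * ·) (mul_eq_one_comm.mp (mul_mul_transpose_mul_eq_one hS hG))
  simpa only [← Matrix.mul_assoc, hS, Matrix.one_mul, Matrix.mul_one] using h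

lemma mul_mul_inv_eq_of_mul_eq_vecMulVec_sub (hS : S * S = 1) (hG : G * S * Gᵀ = S)
    {X : Matrix n n K} {x y : n → K} (hX : X * S = vecMulVec x y - vecMulVec y x) :
    G * X * G⁻¹ = (vecMulVec (G *ᵥ x) (G *ᵥ y) - vecMulVec (G *ᵥ y) (G *ᵥ x)) * S := by
  rw [inv_eq_mul_transpose_mul hS hG, ← Matrix.mul_assoc, ← Matrix.mul_assoc, Matrix.mul_assoc G,
    hX, Matrix.mul_sub, Matrix.sub_mul, mul_vecMulVec, mul_vecMulVec, vecMulVec_mul, vecMulVec_mul,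
    vecMul_transpose, vecMul_transpose]

end Matrix

namespace SO1n

variable {m : ℕ}

def padN (m : ℕ) : (Fin m → ℝ) →ₗ[ℝ] Fin (m + 2) → ℝ :=
  LinearMap.pi fun i => if h : 2 ≤ i.val then LinearMap.proj ⟨i.val - 2, by omega⟩ else 0

@[simp] lemma idxN_ne_zero (j : Fin m) : idxN (m + 1) j ≠ 0 := by simp [idxN, Fin.ext_iff]

@[simp] lemma idxN_ne_one (j : Fin m) : idxN (m + 1) j ≠ 1 := by simp [idxN, Fin.ext_iff]

@[simp] lemma padN_apply_zero (R : Fin m → ℝ) : padN m R 0 = 0 := by simp [padN]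

@[simp] lemma padN_apply_one (R : Fin m → ℝ) : padN m R 1 = 0 := by simp [padN]

@[simp] lemma padN_apply_idxN (R : Fin m → ℝ) (j : Fin m) : padN m R (idxN (m + 1) j) = R j := by
  simp [padN, idxN]

lemma swap_zero_one_idxN (j : Fin m) :
    Equiv.swap (0 : Fin (m + 2)) 1 (idxN (m + 1) j) = idxN (m + 1) j :=
  Equiv.swap_apply_of_ne_of_ne (idxN_ne_zero j) (idxN_ne_one j)

lemma SmatN_eq_permMatrix : SmatN (m + 1) = (Equiv.swap (0 : Fin (m + 2)) 1).permMatrix ℝ := by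
  ext ⟨_ | _ | i, hi⟩ ⟨_ | _ | k, hk⟩ <;>
    simp [SmatN, PEquiv.toMatrix_apply, Equiv.swap_apply_def]

lemma SmatN_mul_self : SmatN (m + 1) * SmatN (m + 1) = 1 := by
  rw [SmatN_eq_permMatrix, ← permMatrix_mul, Equiv.swap_mul_self, permMatrix_one]

lemma mul_SmatN_apply_idxN (M : Matrix (Fin (m + 2)) (Fin (m + 2)) ℝ) (r : Fin (m + 2))
    (j : Fin m) : (M * SmatN (m + 1)) r (idxN (m + 1) j) = M r (idxN (m + 1) j) := by
  rw [SmatN_eq_permMatrix, Equiv.Perm.permMatrix, PEquiv.mul_toMatrix_toPEquiv, submatrix_apply,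
    Equiv.symm_swap, swap_zero_one_idxN, id]

lemma dotProduct_SmatN_mulVec (x y : Fin (m + 2) → ℝ) :
    x ⬝ᵥ (SmatN (m + 1) *ᵥ y) =
      x 0 * y 1 + x 1 * y 0 + (fun j => x (idxN (m + 1) j)) ⬝ᵥ (fun j => y (idxN (m + 1) j)) := by
  rw [SmatN_eq_permMatrix, permMatrix_mulVec, dotProduct, Fin.sum_univ_succ, Fin.sum_univ_succ,
    ← add_assoc]
  simp only [Function.comp_apply, Fin.succ_zero_eq_one, Equiv.swap_apply_left,
    Equiv.swap_apply_right]
  exact congrArg _ (Finset.sum_congr rfl fun j _ =>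
    congrArg (x (idxN (m + 1) j) * y ·) (swap_zero_one_idxN j))

lemma XmatN_mul_SmatN (R : Fin m → ℝ) :
    XmatN (m + 1) R * SmatN (m + 1) =
      vecMulVec (Pi.single 0 1) (padN m R) - vecMulVec (padN m R) (Pi.single 0 1) := by
  rw [SmatN_eq_permMatrix, Equiv.Perm.permMatrix, PEquiv.mul_toMatrix_toPEquiv]
  ext ⟨_ | _ | i, hi⟩ ⟨_ | _ | k, hk⟩ <;>
    simp [XmatN, padN, vecMulVec_apply, Equiv.swap_apply_def]

lemma dotProduct_SmatN_self_eq_zero_of_tail_proportional {u v : Fin (m + 2) → ℝ} {r : Fin (m + 2)}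
    (hr : r = 0 ∨ r = 1) (hu : u r ≠ 0) (huu : u ⬝ᵥ (SmatN (m + 1) *ᵥ u) = 0)
    (huv : u ⬝ᵥ (SmatN (m + 1) *ᵥ v) = 0)
    (h : u r • (fun j => v (idxN (m + 1) j)) = v r • (fun j => u (idxN (m + 1) j))) :
    v ⬝ᵥ (SmatN (m + 1) *ᵥ v) = 0 := by
  rw [dotProduct_SmatN_mulVec] at huu huv ⊢
  set u' := fun j => u (idxN (m + 1) j)
  set v' := fun j => v (idxN (m + 1) j)
  have hvv : u r ^ 2 * (v' ⬝ᵥ v') = v r ^ 2 * (u' ⬝ᵥ u') := by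
    have := congrArg (fun w => w ⬝ᵥ w) h
    simp only [smul_dotProduct, dotProduct_smul, smul_eq_mul] at this
    linear_combination this
  have huv' : u r * (u' ⬝ᵥ v') = v r * (u' ⬝ᵥ u') := by
    simpa only [dotProduct_smul, smul_eq_mul] using congrArg (u' ⬝ᵥ ·) h
  refine (mul_eq_zero.mp ?_).resolve_left (pow_ne_zero 2 hu)
  rcases hr with rfl | rfl
  · linear_combination hvv - v 0 ^ 2 * huu + 2 * v 0 * u 0 * huv - 2 * v 0 * huv'
  · linear_combination hvv - v 1 ^ 2 * huu + 2 * v 1 * u 1 * huv - 2 * v 1 * huv'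

lemma apply_zero_ne_zero_or_apply_one_ne_zero {u : Fin (m + 2) → ℝ} (hu : u ≠ 0)
    (huu : u ⬝ᵥ (SmatN (m + 1) *ᵥ u) = 0) : u 0 ≠ 0 ∨ u 1 ≠ 0 := by
  by_contra! h
  obtain ⟨h0, h1⟩ := h
  simp only [dotProduct_SmatN_mulVec, h0, h1, mul_zero, zero_add, dotProduct_self_eq_zero] at huu
  refine hu (funext fun i => ?_)
  rcases i with ⟨_ | _ | i, hi⟩
  exacts [h0, h1, congrFun huu ⟨i, by omega⟩]

variable {G : Matrix (Fin (m + 2)) (Fin (m + 2)) ℝ}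

lemma conj_XmatN_apply_idxN (hG : G * SmatN (m + 1) * Gᵀ = SmatN (m + 1)) (R : Fin m → ℝ)
    (r : Fin (m + 2)) (j : Fin m) :
    (G * XmatN (m + 1) R * G⁻¹) r (idxN (m + 1) j) =
      G r 0 * (G *ᵥ padN m R) (idxN (m + 1) j) - (G *ᵥ padN m R) r * G (idxN (m + 1) j) 0 := by
  rw [Matrix.mul_mul_inv_eq_of_mul_eq_vecMulVec_sub SmatN_mul_self hG (XmatN_mul_SmatN R),
    mul_SmatN_apply_idxN]
  simp [vecMulVec_apply]

lemma eq_zero_of_conj_XmatN_apply_idxN_eq_zero (hG : G * SmatN (m + 1) * Gᵀ = SmatN (m + 1))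
    {r : Fin (m + 2)} (hr : r = 0 ∨ r = 1) (hGr : G r 0 ≠ 0) {R : Fin m → ℝ}
    (h : ∀ j, (G * XmatN (m + 1) R * G⁻¹) r (idxN (m + 1) j) = 0) : R = 0 := by
  have hGt := Matrix.transpose_mul_mul_eq SmatN_mul_self hG
  have hu : (G *ᵥ Pi.single 0 1) r ≠ 0 := by simpa [mulVec_single_one] using hGr
  have hv := dotProduct_SmatN_self_eq_zero_of_tail_proportional (v := G *ᵥ padN m R) hr hu
    (by rw [Matrix.mulVec_dotProduct_mulVec_mulVec hGt, dotProduct_SmatN_mulVec]; simp)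
    (by rw [Matrix.mulVec_dotProduct_mulVec_mulVec hGt, dotProduct_SmatN_mulVec]; simp)
    (funext fun j => by simpa [conj_XmatN_apply_idxN hG, mulVec_single_one, sub_eq_zero] using h j)
  rw [Matrix.mulVec_dotProduct_mulVec_mulVec hGt, dotProduct_SmatN_mulVec] at hv
  simpa using hv

lemma bijective_conj_XmatN_apply_idxN (hG : G * SmatN (m + 1) * Gᵀ = SmatN (m + 1))
    {r : Fin (m + 2)} (hr : r = 0 ∨ r = 1) (hGr : G r 0 ≠ 0) :
    Function.Bijective fun (R : Fin m → ℝ) j => (G * XmatN (m + 1) R * G⁻¹) r (idxN (m + 1) j) := by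
  let Φ : (Fin m → ℝ) →ₗ[ℝ] Fin m → ℝ :=
    { toFun R j := (G * XmatN (m + 1) R * G⁻¹) r (idxN (m + 1) j)
      map_add' R R' := by
        ext j
        simp only [conj_XmatN_apply_idxN hG, map_add, mulVec_add, Pi.add_apply]
        ring
      map_smul' c R := by
        ext j
        simp only [conj_XmatN_apply_idxN hG, map_smul, mulVec_smul, Pi.smul_apply, smul_eq_mul,
          RingHom.id_apply]
        ring }
  have hinj : Function.Injective Φ := (injective_iff_map_eq_zero Φ).mpr fun R hR =>
    eq_zero_of_conj_XmatN_apply_idxN_eq_zero hG hr hGr (congrFun hR)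
  exact ⟨hinj, LinearMap.injective_iff_surjective.mp hinj⟩

end SO1n

open SO1n

/-- For every `g ∈ SO(1,n)`, at least one of the linear maps
`R_g, S_g : 𝔫 → ℝ^{n-1}` (last `n−1` entries of the first, resp. second, row of
`g X(R) g⁻¹`) is invertible. -/
theorem stmt10 (n : ℕ) (hn : 2 ≤ n) (g : GL (Fin (n+1)) ℝ)
    (hg1 : (↑g : Matrix (Fin (n+1)) (Fin (n+1)) ℝ) * SmatN n *
      (↑g : Matrix (Fin (n+1)) (Fin (n+1)) ℝ)ᵀ = SmatN n) :
    Function.Bijective (fun R : Fin (n-1) → ℝ => fun j : Fin (n-1) =>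
      ((↑g : Matrix (Fin (n+1)) (Fin (n+1)) ℝ) * XmatN n R *
        (↑g⁻¹ : Matrix (Fin (n+1)) (Fin (n+1)) ℝ)) ⟨0, by omega⟩ (idxN n j)) ∨
    Function.Bijective (fun R : Fin (n-1) → ℝ => fun j : Fin (n-1) =>
      ((↑g : Matrix (Fin (n+1)) (Fin (n+1)) ℝ) * XmatN n R *
        (↑g⁻¹ : Matrix (Fin (n+1)) (Fin (n+1)) ℝ)) ⟨1, by omega⟩ (idxN n j)) := by
  obtain ⟨m, rfl⟩ : ∃ m, n = m + 1 := ⟨n - 1, by omega⟩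
  set G : Matrix (Fin (m + 2)) (Fin (m + 2)) ℝ := ↑g
  have hcol : G *ᵥ Pi.single 0 1 ≠ 0 := by
    rw [← mulVec_zero G]
    exact (mulVec_injective_of_isUnit g.isUnit).ne (Pi.single_ne_zero_iff.mpr one_ne_zero)
  have hiso : (G *ᵥ Pi.single 0 1) ⬝ᵥ (SmatN (m + 1) *ᵥ (G *ᵥ Pi.single 0 1)) = 0 := by
    rw [Matrix.mulVec_dotProduct_mulVec_mulVec (Matrix.transpose_mul_mul_eq SmatN_mul_self hg1),
      dotProduct_SmatN_mulVec]
    simp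
  rw [Matrix.coe_units_inv]
  rcases apply_zero_ne_zero_or_apply_one_ne_zero hcol hiso with h | h <;>
    simp only [mulVec_single_one] at h
  · exact Or.inl (bijective_conj_XmatN_apply_idxN hg1 (Or.inl rfl) h)
  · exact Or.inr (bijective_conj_XmatN_apply_idxN hg1 (Or.inr rfl) h)
end
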